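/- The staircase GQ-polynomial factors: GQ_{δ_r}(x_1,…,x_r|b) = ∏_{1≤i≤j≤r} (x_i ⊕ x_j), independent of b. -/

import Mathlib

/-!
With `z(t) = t / (1 + β t)` one has `x ⊖ y = (z(x) - z(y)) (1 + β x)`. For the staircase the
`r - 1 - i` factors `1 + β x_{w i}` contributed by `[[x_{w i}|b]]^{r-i}` cancel against
the `r - 1 - i` denominators `x_{w i} ⊖ x_{w j}`, `j > i`. Since `(x_i ⊕ x_j) / (z_i - z_j)` is
antisymmetric, the sum over `S_r` becomes `∏_i (x_i ⊕ x_i) ∏_{i<j} (x_i ⊕ x_j) / (z_i - z_j)`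
times `det (p_j (z_i))`, where `p_j = ∏_{k < r-1-j} (X - z(b_k))` is monic of degree `r - 1 - j`.
That determinant is the Vandermonde determinant `∏_{i<j} (z_i - z_j)`, whatever the `b_k`.
-/

open Finset

theorem Fin.prod_prod_Ioi_rev {M : Type*} [CommMonoid M] {n : ℕ} (g : Fin n → Fin n → M) :
    ∏ i, ∏ j ∈ Ioi i, g (Fin.rev j) (Fin.rev i) = ∏ i, ∏ j ∈ Ioi i, g i j := by
  rw [prod_sigma', prod_sigma']
  refine prod_nbij' (fun p => ⟨Fin.rev p.2, Fin.rev p.1⟩)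
    (fun p => ⟨Fin.rev p.2, Fin.rev p.1⟩) ?_ ?_ ?_ ?_ ?_ <;> simp [Fin.rev_lt_rev]

section
variable {K : Type*} [Field K]

theorem sub_div_one_add_mul_eq {β s t : K} (hs : 1 + β * s ≠ 0) (ht : 1 + β * t ≠ 0) :
    (s - t) / (1 + β * t) = (s / (1 + β * s) - t / (1 + β * t)) * (1 + β * s) := by
  rw [div_sub_div _ _ hs ht, div_mul_eq_mul_div, div_eq_div_iff ht (mul_ne_zero hs ht)]
  ring

theorem div_sub_div_one_add_mul_ne_zero {β s t : K} (hs : 1 + β * s ≠ 0) (ht : 1 + β * t ≠ 0)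
    (hst : s ≠ t) : s / (1 + β * s) - t / (1 + β * t) ≠ 0 := by
  have h : (s - t) / (1 + β * t) ≠ 0 := div_ne_zero (sub_ne_zero.mpr hst) ht
  rw [sub_div_one_add_mul_eq hs ht] at h
  exact left_ne_zero_of_mul h

open Polynomial in
theorem sum_sign_mul_prod_eval_eq_prod_sub {n : ℕ} (z : Fin n → K) (p : Fin n → K[X])
    (hdeg : ∀ i, (p i).natDegree = n - 1 - i) (hmonic : ∀ i, (p i).Monic) :
    ∑ σ : Equiv.Perm (Fin n), (σ.sign : K) * ∏ i, (p i).eval (z (σ i)) =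
      ∏ i, ∏ j ∈ Ioi i, (z i - z j) := by
  have hdeg_rev : ∀ i, (p (Fin.rev i)).natDegree = i := fun i => by
    rw [hdeg, Fin.val_rev]
    omega
  calc ∑ σ : Equiv.Perm (Fin n), (σ.sign : K) * ∏ i, (p i).eval (z (σ i))
      = (Matrix.of fun i j => (p j).eval (z i)).det := by
        rw [Matrix.det_apply']
        rfl
    _ = (Matrix.of fun i j : Fin n => (p (Fin.rev j)).eval (z (Fin.rev i))).det :=
        (Matrix.det_submatrix_equiv_self Fin.revPerm _).symm
    _ = (Matrix.vandermonde (z ∘ Fin.rev)).det :=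
        (Matrix.det_eval_matrixOfPolynomials_eq_det_vandermonde _ _ hdeg_rev
          fun i => hmonic _).symm
    _ = ∏ i, ∏ j ∈ Ioi i, (z i - z j) := by
        rw [Matrix.det_vandermonde]
        exact Fin.prod_prod_Ioi_rev fun a b => z a - z b

theorem staircase_summand_eq {r : ℕ} {β : K} {y : Fin r → K} {b : ℕ → K}
    (hy : ∀ i, 1 + β * y i ≠ 0) (hb : ∀ k, 1 + β * b k ≠ 0) :
    (∏ i : Fin r, ((y i + y i + β * y i * y i) *
        ∏ k ∈ range (r - 1 - i), ((y i - b k) / (1 + β * b k)))) *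
      ∏ i : Fin r, ∏ j ∈ Ioi i, ((y i + y j + β * y i * y j) / ((y i - y j) / (1 + β * y j))) =
    (∏ i, (y i + y i + β * y i * y i)) *
      (∏ i : Fin r, ∏ k ∈ range (r - 1 - i), (y i / (1 + β * y i) - b k / (1 + β * b k))) *
      ∏ i, ∏ j ∈ Ioi i,
        ((y i + y j + β * y i * y j) / (y i / (1 + β * y i) - y j / (1 + β * y j))) := by
  have hU : ∏ i : Fin r, (1 + β * y i) ^ (r - 1 - i) ≠ 0 :=
    prod_ne_zero_iff.mpr fun i _ => pow_ne_zero _ (hy i)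
  simp only [sub_div_one_add_mul_eq (hy _) (hb _), sub_div_one_add_mul_eq (hy _) (hy _),
    div_mul_eq_div_div, prod_mul_distrib, prod_div_distrib, prod_const, card_range,
    Fin.card_Ioi]
  have cancel : ∀ A B Q U : K, U ≠ 0 → A * (B * U) * (Q / U) = A * B * Q := by
    intro A B Q U hU
    field_simp
  exact cancel _ _ _ _ hU

end

/-- The staircase GQ-polynomial factors:
`GQ_{δ_r}(x₁,…,x_r|b) = ∏_{1≤i≤j≤r} (x_i ⊕ x_j)`, independent of `b`.
Here `GQ_λ(x|b) = Σ_{w∈S_r} w(∏_i [[x_i|b]]^{λ_i} ∏_{i<j} (x_i⊕x_j)/(x_i⊖x_j))` with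
`[[x|b]]^k = (x⊕x)(x⊖b₁)⋯(x⊖b_{k-1})`, and `δ_r = (r, r-1, …, 1)` so `λ_i = r-i+1`
(1-indexed), i.e. the factor for 0-indexed `i : Fin r` is
`(x_i⊕x_i)·∏_{k < r-1-i}(x_i⊖b_k)`. -/
theorem stmt_4 {K : Type*} [Field K] (r : ℕ) (β : K) (x : Fin r → K) (b : ℕ → K)
    (hx : Function.Injective x)
    (hxu : ∀ i, 1 + β * x i ≠ 0) (hbu : ∀ j, 1 + β * b j ≠ 0) :
    ∑ w : Equiv.Perm (Fin r),
      ((∏ i : Fin r, ((x (w i) + x (w i) + β * x (w i) * x (w i)) *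
          ∏ k ∈ Finset.range (r - 1 - (i : ℕ)), ((x (w i) - b k) / (1 + β * b k)))) *
        ∏ i : Fin r, ∏ j ∈ Finset.Ioi i,
          ((x (w i) + x (w j) + β * x (w i) * x (w j)) /
            ((x (w i) - x (w j)) / (1 + β * x (w j))))) =
    ∏ i : Fin r, ∏ j ∈ Finset.Ici i, (x i + x j + β * x i * x j) := by
  set z : Fin r → K := fun i => x i / (1 + β * x i)
  set p : Fin r → Polynomial K := fun i =>
    ∏ k ∈ range (r - 1 - i), (Polynomial.X - Polynomial.C (b k / (1 + β * b k)))
  set F : Fin r → Fin r → K := fun i j => (x i + x j + β * x i * x j) / (z i - z j)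
  have hz : ∀ i j, i ≠ j → z i - z j ≠ 0 := fun i j hij =>
    div_sub_div_one_add_mul_ne_zero (hxu i) (hxu j) (hx.ne hij)
  have hF : ∀ i j, F i j = -F j i := fun i j => by
    simp only [F, ← div_neg, neg_sub]
    ring
  calc _ = ∑ w : Equiv.Perm (Fin r), (∏ i, (x i + x i + β * x i * x i)) *
          ((w.sign : K) * ∏ i, (p i).eval (z (w i))) * ∏ i, ∏ j ∈ Ioi i, F i j := by
        refine sum_congr rfl fun w _ => ?_
        rw [staircase_summand_eq (fun i => hxu (w i)) hbu,
          Equiv.prod_comp w (fun i => x i + x i + β * x i * x i),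
          w.prod_Ioi_comp_eq_sign_mul_prod hF]
        simp only [p, Polynomial.eval_prod, Polynomial.eval_sub, Polynomial.eval_X,
          Polynomial.eval_C]
        ring
    _ = (∏ i, (x i + x i + β * x i * x i)) * (∏ i, ∏ j ∈ Ioi i, (z i - z j)) *
          ∏ i, ∏ j ∈ Ioi i, F i j := by
        rw [← sum_mul, ← mul_sum, sum_sign_mul_prod_eval_eq_prod_sub z p (by simp [p])
          fun i => Polynomial.monic_prod_X_sub_C _ _]
    _ = ∏ i, ∏ j ∈ Ici i, (x i + x j + β * x i * x j) := by
        rw [mul_assoc, ← prod_mul_distrib, ← prod_mul_distrib]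
        refine prod_congr rfl fun i _ => ?_
        rw [Ici_eq_cons_Ioi, prod_cons, ← prod_mul_distrib]
        congr 1
        exact prod_congr rfl fun j hj => mul_div_cancel₀ _ (hz i j (mem_Ioi.mp hj).ne)
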